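/- Conversely, if the cubic hypersurface Y ⊂ P^{n+1} defined by f(y_0,...,y_n) + l(y_0,...,y_n)·y_{n+1}^2 = 0 is smooth, then the hypersurface X = V(f) ⊂ P^n is smooth and the hyperplane H = V(l) intersects X transversely. -/

import Mathlib

/-!
Write `F = f + l·T²` with `T = y_{n+1}`. Where `T = 0` the gradient of `F` is that of `f`, so a
singular point of `X` is one of `Y`. If `a ∇f + b ∇l = 0` at a point `y ∈ X ∩ H` with `a ≠ 0`,
pick `t` with `t² = b / a`: since `f` and `l` do not involve `T`, the point `y + t e_T` is singular
on `Y`. If `a = 0 ≠ b`, the linear form `l` has zero gradient, hence `l = 0` and `Y = V(f)` is a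
cone, singular at its vertex `e_T`.
-/

open MvPolynomial

namespace MvPolynomial

variable {σ R : Type*}

section CommSemiring

variable [CommSemiring R]

def IsSingularPoint (F : MvPolynomial σ R) (y : σ → R) : Prop :=
  eval y F = 0 ∧ ∀ i, eval y (pderiv i F) = 0

theorem notMem_vars_of_pderiv_eq_zero [IsAddTorsionFree R] {p : MvPolynomial σ R} {i : σ}
    (h : pderiv i p = 0) : i ∉ p.vars := by
  classical
  rw [mem_vars_iff_mem_support]
  rintro ⟨d, hd, hi⟩
  have hle : Finsupp.single i 1 ≤ d :=
    Finsupp.single_le_iff.2 (Nat.one_le_iff_ne_zero.2 (Finsupp.mem_support_iff.1 hi))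
  have hcoeff := coeff_pderiv (i := i) p (d - Finsupp.single i 1)
  rw [h, coeff_zero, tsub_add_cancel_of_le hle, ← Nat.cast_succ, mul_comm, ← nsmul_eq_mul]
    at hcoeff
  exact mem_support_iff.1 hd <| IsAddTorsionFree.nsmul_right_injective (Nat.succ_ne_zero _)
    (hcoeff.symm.trans (smul_zero _).symm)

theorem eval_update_of_notMem_vars [DecidableEq σ] {p : MvPolynomial σ R} {i : σ}
    (h : i ∉ p.vars) (y : σ → R) (t : R) : eval (Function.update y i t) p = eval y p :=
  eval₂Hom_congr' rfl (fun _ hk _ => Function.update_of_ne (ne_of_mem_of_not_mem hk h) _ _) rfl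

theorem eval_update_of_pderiv_eq_zero [DecidableEq σ] [IsAddTorsionFree R] {p : MvPolynomial σ R}
    {i : σ} (h : pderiv i p = 0) (y : σ → R) (t : R) :
    eval (Function.update y i t) p = eval y p :=
  eval_update_of_notMem_vars (notMem_vars_of_pderiv_eq_zero h) y t

theorem IsHomogeneous.eval_update_zero_eq_zero [DecidableEq σ] [IsAddTorsionFree R]
    {p : MvPolynomial σ R} {m : ℕ} (hp : p.IsHomogeneous m) (hm : m ≠ 0) {j : σ}
    (hj : pderiv j p = 0) (t : R) : eval (Function.update 0 j t) p = 0 := by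
  rw [eval_update_of_pderiv_eq_zero hj, eval_zero, constantCoeff_eq, hp.coeff_eq_zero]
  simpa using hm.symm

theorem IsHomogeneous.eq_zero_of_eval_pderiv_eq_zero [Fintype σ] {l : MvPolynomial σ R}
    (hl : l.IsHomogeneous 1) (y : σ → R) (h : ∀ i, eval y (pderiv i l) = 0) : l = 0 := by
  have hpderiv : ∀ i, pderiv i l = 0 := fun i => by
    have hC := totalDegree_eq_zero_iff_eq_C.1
      ((totalDegree_zero_iff_isHomogeneous σ).2 (hl.pderiv (i := i)))
    have hi := h i
    rw [hC, eval_C] at hi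
    rw [hC, hi, C_0]
  simpa [hpderiv, eq_comm] using hl.sum_X_mul_pderiv

theorem isSingularPoint_add_mul_X_sq_of_apply_eq_zero {f l : MvPolynomial σ R} {j : σ}
    {y : σ → R} (hf : IsSingularPoint f y) (hy : y j = 0) :
    IsSingularPoint (f + l * X j ^ 2) y :=
  ⟨by simp [hf.1, hy], fun i => by simp [hf.2 i, hy]⟩

end CommSemiring

section CommRing

variable [CommRing R]

theorem pderiv_comm (i j : σ) (p : MvPolynomial σ R) :
    pderiv i (pderiv j p) = pderiv j (pderiv i p) := by
  classical
  have h : ⁅pderiv i, pderiv j⁆ = (0 : Derivation R (MvPolynomial σ R) (MvPolynomial σ R)) :=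
    derivation_ext fun k => by
      rw [Derivation.commutator_apply]
      simp [pderiv_X, Pi.single_apply, apply_ite]
  have := congr($h p)
  rwa [Derivation.commutator_apply, Derivation.zero_apply, sub_eq_zero] at this

variable [DecidableEq σ] [IsAddTorsionFree R] {f l : MvPolynomial σ R} {j : σ}

theorem IsHomogeneous.isSingularPoint_update_zero {m : ℕ} (hf : f.IsHomogeneous m) (hm : 2 ≤ m)
    (hj : pderiv j f = 0) (t : R) : IsSingularPoint f (Function.update 0 j t) :=
  ⟨hf.eval_update_zero_eq_zero (by omega) hj t, fun _ =>
    hf.pderiv.eval_update_zero_eq_zero (by omega) (by rw [pderiv_comm, hj, map_zero]) t⟩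

theorem isSingularPoint_add_mul_X_sq_update (hfj : pderiv j f = 0) (hlj : pderiv j l = 0)
    {y : σ → R} (hf : eval y f = 0) (hl : eval y l = 0) (t : R)
    (h : ∀ i, eval y (pderiv i f) + t ^ 2 * eval y (pderiv i l) = 0) :
    IsSingularPoint (f + l * X j ^ 2) (Function.update y j t) := by
  have eval_update_pderiv {p : MvPolynomial σ R} (hp : pderiv j p = 0) (i : σ) :
      eval (Function.update y j t) (pderiv i p) = eval y (pderiv i p) :=
    eval_update_of_pderiv_eq_zero (by rw [pderiv_comm, hp, map_zero]) y t
  have hlu := eval_update_of_pderiv_eq_zero hlj y t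
  refine ⟨by simp [eval_update_of_pderiv_eq_zero hfj, hlu, hf, hl], fun i => ?_⟩
  simpa [pderiv_mul, pderiv_pow, eval_update_pderiv hfj, eval_update_pderiv hlj, hlu, hl,
    mul_comm] using h i

end CommRing

end MvPolynomial

/-- Conversely, if the cubic hypersurface
`Y = V(f + l·y_{n+1}^2) ⊂ P^{n+1}` is smooth, then `X = V(f) ⊂ P^n` is smooth and the
hyperplane `H = V(l)` intersects `X` transversely. -/
theorem X_smooth_and_transverse_of_Y_smooth (n : ℕ)
    (f l : MvPolynomial (Fin (n + 2)) ℂ)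
    (hf3 : f.IsHomogeneous 3) (hl1 : l.IsHomogeneous 1)
    (hfvar : pderiv (Fin.last (n + 1)) f = 0)
    (hlvar : pderiv (Fin.last (n + 1)) l = 0)
    -- `Y` is smooth
    (hYsm : ∀ y : Fin (n + 2) → ℂ, y ≠ 0 →
      ¬ (eval y (f + l * (X (Fin.last (n + 1))) ^ 2) = 0 ∧
        ∀ i, eval y (pderiv i (f + l * (X (Fin.last (n + 1))) ^ 2)) = 0)) :
    -- `X` is smooth …
    (∀ y : Fin (n + 2) → ℂ, y ≠ 0 → y (Fin.last (n + 1)) = 0 →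
      eval y f = 0 → (∀ i, eval y (pderiv i f) = 0) → False) ∧
    -- … and `H` intersects `X` transversely
    (∀ y : Fin (n + 2) → ℂ, y ≠ 0 → y (Fin.last (n + 1)) = 0 →
      eval y f = 0 → eval y l = 0 →
      LinearIndependent ℂ
        ![fun i => eval y (pderiv i f), fun i => eval y (pderiv i l)]) := by
  set T := Fin.last (n + 1)
  refine ⟨fun y hy hyT hf hdf =>
    hYsm y hy (isSingularPoint_add_mul_X_sq_of_apply_eq_zero ⟨hf, hdf⟩ hyT), ?_⟩
  intro y hy hyT hf hl
  refine LinearIndependent.pair_iff.2 fun a b hab => ?_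
  have hrel (i) : a * eval y (pderiv i f) + b * eval y (pderiv i l) = 0 := by
    simpa using congrFun hab i
  by_cases ha : a = 0
  · subst ha
    refine ⟨rfl, by_contra fun hb => ?_⟩
    have hl0 : l = 0 := hl1.eq_zero_of_eval_pderiv_eq_zero y fun i =>
      (mul_eq_zero.1 (by simpa using hrel i)).resolve_left hb
    refine hYsm (Function.update 0 T 1) (fun h => by simpa using congrFun h T) ?_
    simpa [hl0, IsSingularPoint] using hf3.isSingularPoint_update_zero (by norm_num) hfvar 1
  · obtain ⟨t, ht⟩ := IsAlgClosed.exists_pow_nat_eq (b / a) two_pos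
    refine (hYsm (Function.update y T t) (fun h => hy ?_)
      (isSingularPoint_add_mul_X_sq_update hfvar hlvar hf hl t fun i => ?_)).elim
    · ext k
      rcases eq_or_ne k T with rfl | hk
      · exact hyT
      · simpa [hk] using congrFun h k
    · rw [ht]
      field_simp
      linear_combination hrel i
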